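/- arXiv:0907.1676 — 3 statements merged into one kernel-verified Lean document; each statement's English description precedes it below -/
import Mathlib

section
/- Let α > 2 and let φ : ℝ³ → ℂ be a characteristic function such that sup_{ξ≠0} |φ(ξ) − 1|/|ξ|^α < ∞. Then φ(ξ) = 1 for all ξ ∈ ℝ³; in other words, for α > 2 the set K^α consists only of the constant function 1. -/
open MeasureTheory Real Filter Topology Metric
open scoped ENNReal NNReal

noncomputable section

/-- ℝ³ as a Euclidean space. -/
abbrev E3 := EuclideanSpace ℝ (Fin 3)

/-- The unit sphere S² in ℝ³. -/
abbrev S2 := Metric.sphere (0 : E3) 1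

/-- The surface measure on the unit sphere S² (total mass 4π). -/
def sphMeasure : Measure S2 := (volume : Measure E3).toSphere

/-- ξ⁺ = (ξ + |ξ|σ)/2. -/
def xiP (ξ : E3) (σ : S2) : E3 := (2 : ℝ)⁻¹ • (ξ + ‖ξ‖ • (σ : E3))

/-- ξ⁻ = (ξ − |ξ|σ)/2. -/
def xiM (ξ : E3) (σ : S2) : E3 := (2 : ℝ)⁻¹ • (ξ - ‖ξ‖ • (σ : E3))

/-- The kernel factor B(ξ·σ/|ξ|). -/
def kern (B : ℝ → ℝ) (ξ : E3) (σ : S2) : ℝ := B ((inner ℝ ξ (σ : E3) : ℝ) / ‖ξ‖)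

/-- φ is a characteristic function: the Fourier transform of a Borel probability
measure on ℝ³, i.e. φ(ξ) = ∫ exp(−i v·ξ) dμ(v). -/
def IsCharFun (φ : E3 → ℂ) : Prop :=
  ∃ μ : Measure E3, IsProbabilityMeasure μ ∧
    ∀ ξ : E3, φ ξ = ∫ v, Complex.exp (-(Complex.I * ((inner ℝ v ξ : ℝ) : ℂ))) ∂μ

/-- ‖φ − ψ‖_α = sup_{ξ ≠ 0} |φ(ξ) − ψ(ξ)|/|ξ|^α, as a value in [0,∞]. -/
def dAlpha (α : ℝ) (φ ψ : E3 → ℂ) : ℝ≥0∞ :=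
  ⨆ (ξ : E3) (_ : ξ ≠ 0), (‖φ ξ - ψ ξ‖₊ : ℝ≥0∞) / (‖ξ‖₊ : ℝ≥0∞) ^ α

/-- Membership in the space K^α: a characteristic function with ‖φ−1‖_α < ∞. -/
def memK (α : ℝ) (φ : E3 → ℂ) : Prop := IsCharFun φ ∧ dAlpha α φ 1 ≠ ⊤

/-!
For a probability measure `μ`, the function `g ξ = 1 - Re φ(ξ) = ∫ (1 - cos ⟨v, ξ⟩) dμ(v)` satisfies
`g (2ξ) ≤ 4 g(ξ)`, since `1 - cos 2θ = 2 (1 - cos θ)(1 + cos θ)`. Iterating,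
`g ξ ≤ 4ⁿ g (2⁻ⁿ ξ) ≤ C |ξ|^α (4 / 2^α)ⁿ`, which tends to `0` when `α > 2`. So `Re φ = 1`,
and `|φ| ≤ 1` forces `φ = 1`.
-/

namespace MeasureTheory

variable {E : Type*} [NormedAddCommGroup E] [InnerProductSpace ℝ E] [MeasurableSpace E]
  [OpensMeasurableSpace E] (μ : Measure E)

lemma integrable_cos_inner [IsFiniteMeasure μ] (t : E) :
    Integrable (fun x => cos (inner ℝ x t)) μ :=
  (integrable_const 1).mono' (by fun_prop) (.of_forall fun x => by simpa using abs_cos_le_one _)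

lemma re_charFun_eq_integral_cos [IsFiniteMeasure μ] (t : E) :
    (charFun μ t).re = ∫ x, cos (inner ℝ x t) ∂μ := by
  rw [charFun_eq_integral_innerProbChar, ← RCLike.re_to_complex,
    ← integral_re ((BoundedContinuousFunction.innerProbChar t).integrable μ)]
  simp [BoundedContinuousFunction.innerProbChar_apply, Complex.exp_ofReal_mul_I_re]

lemma one_sub_re_charFun_eq_integral [IsProbabilityMeasure μ] (t : E) :
    1 - (charFun μ t).re = ∫ x, (1 - cos (inner ℝ x t)) ∂μ := by
  rw [integral_sub (integrable_const 1) (integrable_cos_inner μ t), re_charFun_eq_integral_cos]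
  simp

lemma one_sub_re_charFun_two_smul_le [IsProbabilityMeasure μ] (t : E) :
    1 - (charFun μ ((2 : ℝ) • t)).re ≤ 4 * (1 - (charFun μ t).re) := by
  have hint (s : E) : Integrable (fun x => 1 - cos (inner ℝ x s)) μ :=
    (integrable_const 1).sub (integrable_cos_inner μ s)
  rw [one_sub_re_charFun_eq_integral, one_sub_re_charFun_eq_integral, ← integral_const_mul]
  refine integral_mono (hint _) ((hint t).const_mul 4) fun x => ?_
  simp only [real_inner_smul_right, cos_two_mul]
  nlinarith [cos_le_one (inner ℝ x t), neg_one_le_cos (inner ℝ x t)]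

end MeasureTheory

lemma IsCharFun.exists_eq_charFun_neg {φ : E3 → ℂ} (hφ : IsCharFun φ) :
    ∃ μ : Measure E3, IsProbabilityMeasure μ ∧ ∀ ξ, φ ξ = charFun μ (-ξ) := by
  obtain ⟨μ, hμ, hrep⟩ := hφ
  refine ⟨μ, hμ, fun ξ => ?_⟩
  simp only [hrep ξ, charFun_apply, inner_neg_right, Complex.ofReal_neg, mul_comm, mul_neg]

lemma norm_sub_le_dAlpha_toReal_mul {α : ℝ} {φ ψ : E3 → ℂ} (h : dAlpha α φ ψ ≠ ⊤) {ξ : E3}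
    (hξ : ξ ≠ 0) : ‖φ ξ - ψ ξ‖ ≤ (dAlpha α φ ψ).toReal * ‖ξ‖ ^ α := by
  have hξ' : ‖ξ‖₊ ≠ 0 := nnnorm_ne_zero_iff.mpr hξ
  have hle : (‖φ ξ - ψ ξ‖₊ : ℝ≥0∞) / (‖ξ‖₊ : ℝ≥0∞) ^ α ≤ dAlpha α φ ψ :=
    le_iSup₂ (f := fun (ξ : E3) (_ : ξ ≠ 0) => (‖φ ξ - ψ ξ‖₊ : ℝ≥0∞) / (‖ξ‖₊ : ℝ≥0∞) ^ α) ξ hξ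
  rw [← ENNReal.coe_rpow_of_ne_zero hξ', ENNReal.div_le_iff (by simp [hξ]) (by simp)] at hle
  simpa using ENNReal.toReal_mono (ENNReal.mul_ne_top h (by simp)) hle

lemma Complex.eq_one_of_norm_le_one_of_one_le_re {z : ℂ} (hnorm : ‖z‖ ≤ 1) (hre : 1 ≤ z.re) :
    z = 1 := by
  have hre' : z.re = 1 := le_antisymm ((re_le_norm z).trans hnorm) hre
  have him : z.im = 0 :=
    abs_re_eq_norm.mp (le_antisymm (abs_re_le_norm z) (by rw [hre', abs_one]; exact hnorm))
  exact Complex.ext hre' him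

section Doubling

variable {E : Type*} {g : E → ℝ}

lemma le_four_pow_mul_of_two_smul_le [MulAction ℝ E] (hg : ∀ ξ, g ((2 : ℝ) • ξ) ≤ 4 * g ξ)
    (n : ℕ) (ξ : E) : g ((2 : ℝ) ^ n • ξ) ≤ 4 ^ n * g ξ := by
  induction n with
  | zero => simp
  | succ n ih =>
    calc g ((2 : ℝ) ^ (n + 1) • ξ) = g ((2 : ℝ) • (2 : ℝ) ^ n • ξ) := by rw [pow_succ', mul_smul]
      _ ≤ 4 * g ((2 : ℝ) ^ n • ξ) := hg _
      _ ≤ 4 * (4 ^ n * g ξ) := by gcongr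
      _ = 4 ^ (n + 1) * g ξ := by ring

lemma le_zero_of_two_smul_le_of_le_mul_norm_rpow [NormedAddCommGroup E] [NormedSpace ℝ E]
    {α C : ℝ} (hα : 2 < α) (hg : ∀ ξ, g ((2 : ℝ) • ξ) ≤ 4 * g ξ)
    (hbound : ∀ ξ ≠ 0, g ξ ≤ C * ‖ξ‖ ^ α) {ξ : E} (hξ : ξ ≠ 0) : g ξ ≤ 0 := by
  set r : ℝ := 4 / 2 ^ α
  have hr1 : r < 1 := by
    rw [div_lt_one (by positivity)]
    calc (4 : ℝ) = 2 ^ (2 : ℝ) := by norm_num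
      _ < 2 ^ α := rpow_lt_rpow_of_exponent_lt one_lt_two hα
  have hdecay (n : ℕ) : g ξ ≤ C * ‖ξ‖ ^ α * r ^ n :=
    calc g ξ = g ((2 : ℝ) ^ n • ((2 : ℝ) ^ n)⁻¹ • ξ) := by rw [smul_inv_smul₀ (by positivity)]
      _ ≤ 4 ^ n * g (((2 : ℝ) ^ n)⁻¹ • ξ) := le_four_pow_mul_of_two_smul_le hg n _
      _ ≤ 4 ^ n * (C * ‖((2 : ℝ) ^ n)⁻¹ • ξ‖ ^ α) := by gcongr; exact hbound _ (by simp [hξ])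
      _ = C * ‖ξ‖ ^ α * r ^ n := by
        rw [norm_smul, norm_inv, norm_pow, Real.norm_two, mul_rpow (by positivity) (by positivity),
          inv_rpow (by positivity), ← rpow_pow_comm zero_le_two, div_pow]
        ring
  have hlim : Tendsto (fun n : ℕ => C * ‖ξ‖ ^ α * r ^ n) atTop (𝓝 0) := by
    simpa using (tendsto_pow_atTop_nhds_zero_of_lt_one (by positivity) hr1).const_mul
      (C * ‖ξ‖ ^ α)
  exact ge_of_tendsto' hlim hdecay

end Doubling

/-- For α > 2, the set K^α contains only the constant function 1. -/
theorem Kalpha_trivial_of_two_lt (α : ℝ) (hα : 2 < α) (φ : E3 → ℂ)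
    (hφ : IsCharFun φ) (hfin : dAlpha α φ 1 ≠ ⊤) :
    ∀ ξ : E3, φ ξ = 1 := by
  obtain ⟨μ, hμ, hφμ⟩ := hφ.exists_eq_charFun_neg
  have hdouble (ξ : E3) : 1 - (φ ((2 : ℝ) • ξ)).re ≤ 4 * (1 - (φ ξ).re) := by
    simpa only [hφμ, ← smul_neg] using one_sub_re_charFun_two_smul_le μ (-ξ)
  have hbound (ξ : E3) (hξ : ξ ≠ 0) : 1 - (φ ξ).re ≤ (dAlpha α φ 1).toReal * ‖ξ‖ ^ α :=
    calc 1 - (φ ξ).re = (1 - φ ξ).re := by simp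
      _ ≤ ‖φ ξ - 1‖ := by rw [norm_sub_rev]; exact Complex.re_le_norm _
      _ ≤ _ := norm_sub_le_dAlpha_toReal_mul hfin hξ
  intro ξ
  rcases eq_or_ne ξ 0 with rfl | hξ
  · simp [hφμ]
  · refine Complex.eq_one_of_norm_le_one_of_one_le_re (hφμ ξ ▸ norm_charFun_le_one _) ?_
    linarith [le_zero_of_two_smul_le_of_le_mul_norm_rpow hα hdouble hbound hξ]
end
end

section
/- Let α ∈ [0,2] and φ ∈ K^α. Then for every ξ ∈ ℝ³ and every σ in the unit sphere S², with ξ⁺ = (ξ+|ξ|σ)/2 and ξ⁻ = (ξ−|ξ|σ)/2, one has |φ(ξ⁺)φ(ξ⁻) − φ(ξ)| ≤ 4 |ξ⁺|^{α/2} |ξ⁻|^{α/2} ‖φ − 1‖_α. -/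
open MeasureTheory Real Filter Topology Metric
open scoped ENNReal NNReal

noncomputable section

/-!
Write `φ ξ = 𝔼 e_ξ(V)` with the plane waves `e_ξ(v) = exp(-i v·ξ)`, `V ~ μ`. Since
`e_a e_b = e_{a+b}`, the defect `φ(a+b) - φ(a)φ(b)` is the covariance of `e_a(V)` and `e_b(V)`,
so Cauchy–Schwarz bounds it by `√(1 - |φ a|²) √(1 - |φ b|²)`, and `1 - |z|² ≤ 2|z - 1|` turns this
into `2 √|φ a - 1| √|φ b - 1|`. With `a = ξ⁺`, `b = ξ⁻`, `a + b = ξ` and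
`|φ η - 1| ≤ ‖φ - 1‖_α |η|^α` this gives the estimate, even with the constant 2.
-/

open scoped InnerProductSpace

section Covariance

variable {X : Type*} [MeasurableSpace X] {μ : Measure X}

theorem norm_integral_mul_le_sqrt_mul_sqrt {f g : X → ℂ} (hf : MemLp f 2 μ) (hg : MemLp g 2 μ) :
    ‖∫ x, f x * g x ∂μ‖ ≤ √(∫ x, ‖f x‖ ^ 2 ∂μ) * √(∫ x, ‖g x‖ ^ 2 ∂μ) := by
  have holder := integral_mul_norm_le_Lp_mul_Lq (μ := μ) Real.HolderConjugate.two_two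
    (by simpa using hf) (by simpa using hg)
  calc ‖∫ x, f x * g x ∂μ‖ ≤ ∫ x, ‖f x‖ * ‖g x‖ ∂μ := by
        simpa only [norm_mul] using norm_integral_le_integral_norm (fun x => f x * g x)
    _ ≤ _ := holder
    _ = √(∫ x, ‖f x‖ ^ 2 ∂μ) * √(∫ x, ‖g x‖ ^ 2 ∂μ) := by
        simp only [Real.rpow_two, Real.sqrt_eq_rpow]

variable [IsProbabilityMeasure μ]

theorem integral_norm_sub_integral_sq {H : Type*} [NormedAddCommGroup H] [InnerProductSpace ℝ H]
    [CompleteSpace H] {f : X → H} (hf : MemLp f 2 μ) :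
    ∫ x, ‖f x - ∫ y, f y ∂μ‖ ^ 2 ∂μ = ∫ x, ‖f x‖ ^ 2 ∂μ - ‖∫ x, f x ∂μ‖ ^ 2 := by
  set m := ∫ y, f y ∂μ
  have hf1 : Integrable f μ := hf.integrable one_le_two
  have hinner : ∫ x, ⟪f x, m⟫_ℝ ∂μ = ‖m‖ ^ 2 := by
    simp_rw [real_inner_comm m]
    rw [integral_inner hf1, real_inner_self_eq_norm_sq]
  simp_rw [norm_sub_sq_real]
  have hcross : Integrable (fun x => 2 * ⟪f x, m⟫_ℝ) μ := (hf1.inner_const m).const_mul 2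
  rw [integral_add (hf.integrable_norm_pow'.sub' hcross) (integrable_const _),
    integral_sub hf.integrable_norm_pow' hcross, integral_const_mul, hinner, integral_const]
  simp only [probReal_univ, one_smul]
  ring

theorem integral_mul_sub_integral_mul_integral {f g : X → ℂ} (hf : MemLp f 2 μ)
    (hg : MemLp g 2 μ) :
    ∫ x, f x * g x ∂μ - (∫ x, f x ∂μ) * ∫ x, g x ∂μ =
      ∫ x, (f x - ∫ y, f y ∂μ) * (g x - ∫ y, g y ∂μ) ∂μ := by
  set a := ∫ y, f y ∂μ
  set b := ∫ y, g y ∂μ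
  have hfg : Integrable (fun x => f x * g x) μ := hf.integrable_mul hg
  have hf1 : Integrable f μ := hf.integrable one_le_two
  have hg1 : Integrable g μ := hg.integrable one_le_two
  have expand (x : X) : (f x - a) * (g x - b) = f x * g x - (b * f x + a * g x) + a * b := by
    ring
  simp_rw [expand]
  have hlin : Integrable (fun x => b * f x + a * g x) μ :=
    (hf1.const_mul b).fun_add (hg1.const_mul a)
  rw [integral_add (hfg.sub' hlin) (integrable_const _), integral_sub hfg hlin,
    integral_add (hf1.const_mul b) (hg1.const_mul a), integral_const_mul, integral_const_mul,
    integral_const]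
  simp only [probReal_univ, one_smul]
  ring

theorem norm_integral_mul_sub_integral_mul_integral_le {f g : X → ℂ} (hf : MemLp f 2 μ)
    (hg : MemLp g 2 μ) :
    ‖∫ x, f x * g x ∂μ - (∫ x, f x ∂μ) * ∫ x, g x ∂μ‖ ≤
      √(∫ x, ‖f x‖ ^ 2 ∂μ - ‖∫ x, f x ∂μ‖ ^ 2) * √(∫ x, ‖g x‖ ^ 2 ∂μ - ‖∫ x, g x ∂μ‖ ^ 2) := by
  rw [integral_mul_sub_integral_mul_integral hf hg, ← integral_norm_sub_integral_sq hf,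
    ← integral_norm_sub_integral_sq hg]
  exact norm_integral_mul_le_sqrt_mul_sqrt (hf.sub (memLp_const _)) (hg.sub (memLp_const _))

end Covariance

section PlaneWave

variable {E : Type*} [NormedAddCommGroup E] [InnerProductSpace ℝ E]

def planeWave (ξ v : E) : ℂ := Complex.exp (-(Complex.I * ((inner ℝ v ξ : ℝ) : ℂ)))

theorem norm_planeWave (ξ v : E) : ‖planeWave ξ v‖ = 1 := by
  simp [planeWave, Complex.norm_exp]

theorem planeWave_zero (v : E) : planeWave 0 v = 1 := by
  simp [planeWave]

theorem planeWave_add (ξ η v : E) : planeWave (ξ + η) v = planeWave ξ v * planeWave η v := by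
  rw [planeWave, planeWave, planeWave, ← Complex.exp_add, inner_add_right]
  push_cast
  ring_nf

theorem continuous_planeWave (ξ : E) : Continuous (planeWave ξ) := by
  unfold planeWave
  fun_prop

theorem memLp_planeWave [MeasurableSpace E] [OpensMeasurableSpace E] [SecondCountableTopology E]
    (ξ : E) (p : ℝ≥0∞) (μ : Measure E) [IsFiniteMeasure μ] : MemLp (planeWave ξ) p μ :=
  MemLp.of_bound (continuous_planeWave ξ).aestronglyMeasurable 1
    (ae_of_all _ fun v => (norm_planeWave ξ v).le)

end PlaneWave

theorem one_sub_norm_sq_le_two_mul_norm_sub_one {R : Type*} [SeminormedRing R] [NormOneClass R]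
    (z : R) : 1 - ‖z‖ ^ 2 ≤ 2 * ‖z - 1‖ := by
  have h : 1 - ‖z‖ ≤ ‖z - 1‖ := by
    simpa [norm_sub_rev] using norm_sub_norm_le (1 : R) z
  nlinarith [norm_nonneg z, norm_nonneg (z - 1)]

namespace IsCharFun

variable {φ : E3 → ℂ}

theorem exists_eq_integral_planeWave (hφ : IsCharFun φ) :
    ∃ μ : Measure E3, IsProbabilityMeasure μ ∧ ∀ ξ, φ ξ = ∫ v, planeWave ξ v ∂μ :=
  hφ

theorem apply_zero (hφ : IsCharFun φ) : φ 0 = 1 := by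
  obtain ⟨μ, _, hrep⟩ := hφ.exists_eq_integral_planeWave
  simp [hrep, planeWave_zero]

theorem norm_mul_sub_le (hφ : IsCharFun φ) (a b : E3) :
    ‖φ a * φ b - φ (a + b)‖ ≤ √(1 - ‖φ a‖ ^ 2) * √(1 - ‖φ b‖ ^ 2) := by
  obtain ⟨μ, _, hrep⟩ := hφ.exists_eq_integral_planeWave
  have cov := norm_integral_mul_sub_integral_mul_integral_le
    (memLp_planeWave a 2 μ) (memLp_planeWave b 2 μ)
  simp only [← planeWave_add, norm_planeWave, one_pow, integral_const, probReal_univ,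
    one_smul, ← hrep] at cov
  rwa [norm_sub_rev]

theorem enorm_mul_sub_le (hφ : IsCharFun φ) (a b : E3) :
    ‖φ a * φ b - φ (a + b)‖ₑ ≤ 2 * ‖φ a - 1‖ₑ ^ (1 / 2 : ℝ) * ‖φ b - 1‖ₑ ^ (1 / 2 : ℝ) := by
  have hreal : ‖φ a * φ b - φ (a + b)‖ ≤ 2 * √‖φ a - 1‖ * √‖φ b - 1‖ := calc
    _ ≤ √(1 - ‖φ a‖ ^ 2) * √(1 - ‖φ b‖ ^ 2) := hφ.norm_mul_sub_le a b
    _ ≤ √(2 * ‖φ a - 1‖) * √(2 * ‖φ b - 1‖) := by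
      gcongr <;> exact one_sub_norm_sq_le_two_mul_norm_sub_one _
    _ = 2 * √‖φ a - 1‖ * √‖φ b - 1‖ := by
      rw [Real.sqrt_mul zero_le_two, Real.sqrt_mul zero_le_two,
        mul_mul_mul_comm, Real.mul_self_sqrt zero_le_two, mul_assoc]
  calc ‖φ a * φ b - φ (a + b)‖ₑ = ENNReal.ofReal ‖φ a * φ b - φ (a + b)‖ := (ofReal_norm _).symm
    _ ≤ ENNReal.ofReal (2 * √‖φ a - 1‖ * √‖φ b - 1‖) := ENNReal.ofReal_le_ofReal hreal
    _ = 2 * ‖φ a - 1‖ₑ ^ (1 / 2 : ℝ) * ‖φ b - 1‖ₑ ^ (1 / 2 : ℝ) := by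
      rw [ENNReal.ofReal_mul (by positivity), ENNReal.ofReal_mul zero_le_two,
        Real.sqrt_eq_rpow, Real.sqrt_eq_rpow,
        ← ENNReal.ofReal_rpow_of_nonneg (norm_nonneg _) (by norm_num),
        ← ENNReal.ofReal_rpow_of_nonneg (norm_nonneg _) (by norm_num),
        ofReal_norm, ofReal_norm, ENNReal.ofReal_ofNat]

end IsCharFun

theorem enorm_sub_le_dAlpha_mul {α : ℝ} {φ ψ : E3 → ℂ} (h0 : φ 0 = ψ 0) (η : E3) :
    ‖φ η - ψ η‖ₑ ≤ dAlpha α φ ψ * ‖η‖ₑ ^ α := by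
  rcases eq_or_ne η 0 with rfl | hη
  · simp [h0]
  have hpos : ‖η‖ₑ ^ α ≠ 0 := by simp [ENNReal.rpow_eq_zero_iff, hη]
  have hfin : ‖η‖ₑ ^ α ≠ ⊤ := by simp [ENNReal.rpow_eq_top_iff, hη]
  rw [← ENNReal.div_le_iff hpos hfin]
  exact le_iSup₂ (f := fun ζ (_ : ζ ≠ 0) => ‖φ ζ - ψ ζ‖ₑ / ‖ζ‖ₑ ^ α) η hη

theorem xiP_add_xiM (ξ : E3) (σ : S2) : xiP ξ σ + xiM ξ σ = ξ := by
  rw [xiP, xiM, ← smul_add, add_add_sub_cancel, ← two_smul ℝ, smul_smul]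
  norm_num

theorem collision_product_estimate_general (α : ℝ) (φ : E3 → ℂ)
    (hφ : memK α φ) (ξ : E3) (σ : S2) :
    (‖φ (xiP ξ σ) * φ (xiM ξ σ) - φ ξ‖₊ : ℝ≥0∞) ≤
      4 * (‖xiP ξ σ‖₊ : ℝ≥0∞) ^ (α/2) * (‖xiM ξ σ‖₊ : ℝ≥0∞) ^ (α/2) * dAlpha α φ 1 := by
  set D := dAlpha α φ 1
  set s := D ^ (1 / 2 : ℝ)
  have hs : s * s = D := by
    rw [← ENNReal.rpow_add_of_nonneg _ _ (by norm_num) (by norm_num)]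
    norm_num
  have hsqrt (η : E3) : ‖φ η - 1‖ₑ ^ (1 / 2 : ℝ) ≤ s * ‖η‖ₑ ^ (α / 2) := calc
    _ ≤ (D * ‖η‖ₑ ^ α) ^ (1 / 2 : ℝ) :=
      ENNReal.rpow_le_rpow (enorm_sub_le_dAlpha_mul hφ.1.apply_zero η) (by norm_num)
    _ = s * ‖η‖ₑ ^ (α / 2) := by
      rw [ENNReal.mul_rpow_of_nonneg _ _ (by norm_num), ← ENNReal.rpow_mul, mul_one_div]
  calc ‖φ (xiP ξ σ) * φ (xiM ξ σ) - φ ξ‖ₑ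
      ≤ 2 * ‖φ (xiP ξ σ) - 1‖ₑ ^ (1 / 2 : ℝ) * ‖φ (xiM ξ σ) - 1‖ₑ ^ (1 / 2 : ℝ) := by
        simpa only [xiP_add_xiM] using hφ.1.enorm_mul_sub_le (xiP ξ σ) (xiM ξ σ)
    _ ≤ 2 * (s * ‖xiP ξ σ‖ₑ ^ (α / 2)) * (s * ‖xiM ξ σ‖ₑ ^ (α / 2)) := by
        gcongr <;> exact hsqrt _
    _ = 2 * ‖xiP ξ σ‖ₑ ^ (α / 2) * ‖xiM ξ σ‖ₑ ^ (α / 2) * D := by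
        rw [← hs]
        ring
    _ ≤ 4 * ‖xiP ξ σ‖ₑ ^ (α / 2) * ‖xiM ξ σ‖ₑ ^ (α / 2) * D := by
        gcongr
        norm_num

/-- For φ ∈ K^α and all ξ ∈ ℝ³, σ ∈ S²:
|φ(ξ⁺)φ(ξ⁻) − φ(ξ)| ≤ 4 |ξ⁺|^{α/2} |ξ⁻|^{α/2} ‖φ − 1‖_α. -/
theorem collision_product_estimate (α : ℝ) (hα : α ∈ Set.Icc (0 : ℝ) 2) (φ : E3 → ℂ)
    (hφ : memK α φ) (ξ : E3) (σ : S2) :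
    (‖φ (xiP ξ σ) * φ (xiM ξ σ) - φ ξ‖₊ : ℝ≥0∞) ≤
      4 * (‖xiP ξ σ‖₊ : ℝ≥0∞) ^ (α/2) * (‖xiM ξ σ‖₊ : ℝ≥0∞) ^ (α/2) * dAlpha α φ 1 :=
  collision_product_estimate_general α φ hφ ξ σ
end
end

section
/- Let α ∈ (0,2] and let μ be a Borel probability measure on ℝ³ with ∫_{ℝ³} |v|^α dμ(v) < ∞; if α ∈ (1,2], assume in addition that ∫_{ℝ³} v_i dμ(v) = 0 for i = 1,2,3. Then the characteristic function φ(ξ) = ∫_{ℝ³} e^{−i v·ξ} dμ(v) belongs to K^α; more precisely there is a constant C depending only on α such that ‖φ − 1‖_α ≤ C ∫_{ℝ³} |v|^α dμ(v). -/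
open MeasureTheory Real Filter Topology Metric
open scoped ENNReal NNReal

noncomputable section

/-!
For `α ≤ 1` one has `|e^{-ix} - 1| ≤ 2 min(1, |x|) ≤ 2 |x|^α`. For `1 < α ≤ 2` the zero mean lets
one subtract the first-order term `-ix` under the integral, and
`|e^{-ix} - 1 + ix| ≤ 2 |x| min(1, |x|) ≤ 2 |x|^α`. Integrating either bound at `x = v·ξ` and
using `|v·ξ| ≤ |v| |ξ|` gives `|φ(ξ) - 1| ≤ 2 |ξ|^α ∫ |v|^α dμ`, so `C = 2` works.
-/

lemma min_one_le_rpow {t β : ℝ} (ht : 0 ≤ t) (hβ0 : 0 ≤ β) (hβ1 : β ≤ 1) : min 1 t ≤ t ^ β := by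
  rcases le_total t 1 with h | h
  · calc min 1 t ≤ t := min_le_right _ _
      _ = t ^ (1 : ℝ) := (Real.rpow_one t).symm
      _ ≤ t ^ β := Real.rpow_le_rpow_of_exponent_ge' ht h hβ0 hβ1
  · exact (min_le_left _ _).trans (Real.one_le_rpow h hβ0)

lemma norm_exp_neg_I_mul_sub_one_le_abs (x : ℝ) :
    ‖Complex.exp (-(Complex.I * x)) - 1‖ ≤ |x| := by
  simpa [mul_neg] using Real.norm_exp_I_mul_ofReal_sub_one_le (x := -x)

lemma norm_exp_neg_I_mul_sub_one_le (x : ℝ) :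
    ‖Complex.exp (-(Complex.I * x)) - 1‖ ≤ 2 * min 1 |x| := by
  rcases le_total |x| 1 with hx | hx
  · rw [min_eq_right hx]
    linarith [norm_exp_neg_I_mul_sub_one_le_abs x, abs_nonneg x]
  · rw [min_eq_left hx]
    calc ‖Complex.exp (-(Complex.I * x)) - 1‖
        ≤ ‖Complex.exp (-(Complex.I * x))‖ + ‖(1 : ℂ)‖ := norm_sub_le _ _
      _ = 2 * 1 := by rw [← mul_neg, ← Complex.ofReal_neg, Complex.norm_exp_I_mul_ofReal]; norm_num

lemma norm_exp_neg_I_mul_sub_one_add_le (x : ℝ) :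
    ‖Complex.exp (-(Complex.I * x)) - 1 + Complex.I * x‖ ≤ 2 * |x| * min 1 |x| := by
  rcases le_total |x| 1 with hx | hx
  · have hnorm : ‖-(Complex.I * x)‖ = |x| := by simp
    have htaylor := Complex.norm_exp_sub_one_sub_id_le (hnorm.trans_le hx)
    rw [hnorm, sub_neg_eq_add, sq_abs] at htaylor
    rw [min_eq_right hx]
    nlinarith [sq_nonneg x, sq_abs x]
  · rw [min_eq_left hx, mul_one, two_mul]
    calc ‖Complex.exp (-(Complex.I * x)) - 1 + Complex.I * x‖
        ≤ ‖Complex.exp (-(Complex.I * x)) - 1‖ + ‖Complex.I * x‖ := norm_add_le _ _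
      _ ≤ |x| + |x| := by
          gcongr
          · exact norm_exp_neg_I_mul_sub_one_le_abs x
          · simp

lemma norm_exp_neg_I_mul_sub_one_le_rpow {α : ℝ} (hα0 : 0 ≤ α) (hα1 : α ≤ 1) (x : ℝ) :
    ‖Complex.exp (-(Complex.I * x)) - 1‖ ≤ 2 * |x| ^ α :=
  (norm_exp_neg_I_mul_sub_one_le x).trans <| by
    gcongr; exact min_one_le_rpow (abs_nonneg x) hα0 hα1

lemma norm_exp_neg_I_mul_sub_one_add_le_rpow {α : ℝ} (hα1 : 1 ≤ α) (hα2 : α ≤ 2) (x : ℝ) :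
    ‖Complex.exp (-(Complex.I * x)) - 1 + Complex.I * x‖ ≤ 2 * |x| ^ α :=
  calc ‖Complex.exp (-(Complex.I * x)) - 1 + Complex.I * x‖
      ≤ 2 * |x| * min 1 |x| := norm_exp_neg_I_mul_sub_one_add_le x
    _ ≤ 2 * |x| * |x| ^ (α - 1) := by
        gcongr; exact min_one_le_rpow (abs_nonneg x) (by linarith) (by linarith)
    _ = 2 * |x| ^ α := by
        rw [mul_assoc, ← Real.rpow_one_add' (abs_nonneg x) (by linarith), add_sub_cancel]

lemma MeasureTheory.Integrable.of_integrable_norm_rpow {X F : Type*} [MeasurableSpace X] [NormedAddCommGroup F]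
    {μ : Measure X} [IsFiniteMeasure μ] {f : X → F} {p : ℝ} (hf : AEStronglyMeasurable f μ)
    (hp : 1 ≤ p) (h : Integrable (fun x => ‖f x‖ ^ p) μ) : Integrable f μ := by
  have hmem : MemLp f (ENNReal.ofReal p) μ :=
    (integrable_norm_rpow_iff hf (by simp; linarith) ENNReal.ofReal_ne_top).1
      (by rwa [ENNReal.toReal_ofReal (by linarith)])
  exact hmem.integrable (by simpa using hp)

section InnerProductSpace

variable {E : Type*} [NormedAddCommGroup E] [InnerProductSpace ℝ E] [MeasurableSpace E]
  {μ : Measure E}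

lemma norm_integral_comp_inner_le {g : ℝ → ℂ} {α c : ℝ} (hα : 0 ≤ α)
    (hg : ∀ x, ‖g x‖ ≤ c * |x| ^ α) (hmom : Integrable (fun v : E => ‖v‖ ^ α) μ) (ξ : E) :
    ‖∫ v, g (inner ℝ v ξ) ∂μ‖ ≤ c * ‖ξ‖ ^ α * ∫ v, ‖v‖ ^ α ∂μ := by
  have hc : 0 ≤ c := by simpa using (norm_nonneg _).trans (hg 1)
  rw [← integral_const_mul]
  refine norm_integral_le_of_norm_le (hmom.const_mul _) (.of_forall fun v => ?_)
  calc ‖g (inner ℝ v ξ)‖ ≤ c * |inner ℝ v ξ| ^ α := hg _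
    _ ≤ c * (‖v‖ * ‖ξ‖) ^ α := by gcongr; exact abs_real_inner_le_norm v ξ
    _ = c * ‖ξ‖ ^ α * ‖v‖ ^ α := by rw [Real.mul_rpow (norm_nonneg v) (norm_nonneg ξ)]; ring

variable [OpensMeasurableSpace E]

lemma integrable_exp_neg_I_mul_inner [IsFiniteMeasure μ] (ξ : E) :
    Integrable (fun v => Complex.exp (-(Complex.I * (inner ℝ v ξ : ℝ)))) μ :=
  .of_bound (by fun_prop) 1 (.of_forall fun v => by
    rw [← mul_neg, ← Complex.ofReal_neg, Complex.norm_exp_I_mul_ofReal])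

lemma integral_exp_neg_I_mul_inner_sub_one [IsProbabilityMeasure μ] (ξ : E) :
    ∫ v, Complex.exp (-(Complex.I * (inner ℝ v ξ : ℝ))) ∂μ - 1 =
      ∫ v, (Complex.exp (-(Complex.I * (inner ℝ v ξ : ℝ))) - 1) ∂μ := by
  rw [integral_sub (integrable_exp_neg_I_mul_inner ξ) (integrable_const 1), integral_const,
    probReal_univ, one_smul]

lemma integral_exp_neg_I_mul_inner_sub_one_of_integral_eq_zero [CompleteSpace E]
    [IsProbabilityMeasure μ] (hint : Integrable (fun v => v) μ) (hmean : ∫ v, v ∂μ = 0) (ξ : E) :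
    ∫ v, Complex.exp (-(Complex.I * (inner ℝ v ξ : ℝ))) ∂μ - 1 =
      ∫ v, (Complex.exp (-(Complex.I * (inner ℝ v ξ : ℝ))) - 1 + Complex.I * (inner ℝ v ξ : ℝ))
        ∂μ := by
  have hinner : ∫ v, (inner ℝ v ξ : ℝ) ∂μ = 0 := by
    simp_rw [real_inner_comm ξ]
    rw [integral_inner hint, hmean, inner_zero_right]
  have hlin : ∫ v, Complex.I * (inner ℝ v ξ : ℝ) ∂μ = 0 := by
    rw [integral_const_mul, integral_complex_ofReal, hinner, Complex.ofReal_zero, mul_zero]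
  have hexp : Integrable (fun v => Complex.exp (-(Complex.I * (inner ℝ v ξ : ℝ))) - 1) μ :=
    (integrable_exp_neg_I_mul_inner ξ).sub (integrable_const 1)
  have hlinInt : Integrable (fun v => Complex.I * (inner ℝ v ξ : ℝ)) μ :=
    (hint.inner_const ξ).ofReal.const_mul _
  rw [integral_add hexp hlinInt, hlin, add_zero,
    integral_exp_neg_I_mul_inner_sub_one]

end InnerProductSpace

lemma norm_integral_exp_neg_I_mul_inner_sub_one_le {E : Type*} [NormedAddCommGroup E]
    [InnerProductSpace ℝ E] [CompleteSpace E] [SecondCountableTopology E] [MeasurableSpace E]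
    [BorelSpace E] {μ : Measure E} [IsProbabilityMeasure μ] {α : ℝ} (hα0 : 0 ≤ α) (hα2 : α ≤ 2)
    (hmom : Integrable (fun v : E => ‖v‖ ^ α) μ) (hmean : 1 < α → ∫ v, v ∂μ = 0) (ξ : E) :
    ‖∫ v, Complex.exp (-(Complex.I * (inner ℝ v ξ : ℝ))) ∂μ - 1‖ ≤
      2 * ‖ξ‖ ^ α * ∫ v, ‖v‖ ^ α ∂μ := by
  rcases le_or_gt α 1 with hα1 | hα1
  · rw [integral_exp_neg_I_mul_inner_sub_one]
    exact norm_integral_comp_inner_le hα0 (norm_exp_neg_I_mul_sub_one_le_rpow hα0 hα1) hmom ξ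
  · have hint : Integrable (fun v => v) μ :=
      .of_integrable_norm_rpow aestronglyMeasurable_id hα1.le hmom
    rw [integral_exp_neg_I_mul_inner_sub_one_of_integral_eq_zero hint (hmean hα1)]
    exact norm_integral_comp_inner_le hα0 (norm_exp_neg_I_mul_sub_one_add_le_rpow hα1.le hα2)
      hmom ξ

lemma dAlpha_le_ofReal {α C : ℝ} {φ ψ : E3 → ℂ} (h : ∀ ξ, ‖φ ξ - ψ ξ‖ ≤ C * ‖ξ‖ ^ α) :
    dAlpha α φ ψ ≤ ENNReal.ofReal C := by
  refine iSup₂_le fun ξ hξ => ENNReal.div_le_of_le_mul ?_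
  calc (‖φ ξ - ψ ξ‖₊ : ℝ≥0∞) = ENNReal.ofReal ‖φ ξ - ψ ξ‖ := (ofReal_norm _).symm
    _ ≤ ENNReal.ofReal (C * ‖ξ‖ ^ α) := ENNReal.ofReal_le_ofReal (h ξ)
    _ = ENNReal.ofReal C * (‖ξ‖₊ : ℝ≥0∞) ^ α := by
        rw [ENNReal.ofReal_mul' (by positivity), ← ENNReal.ofReal_rpow_of_pos (norm_pos_iff.2 hξ),
          ofReal_norm, enorm_eq_nnnorm]

/-- If μ is a Borel probability measure on ℝ³ with finite moment of order α ∈ (0,2]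
(with zero mean if α > 1), then its characteristic function belongs to K^α, and
‖φ − 1‖_α ≤ C ∫ |v|^α dμ(v) for a constant C depending only on α. -/
theorem charFun_mem_Kalpha_of_moment (α : ℝ) (hα : α ∈ Set.Ioc (0 : ℝ) 2) :
    ∃ C : ℝ, 0 < C ∧
      ∀ μ : Measure E3, IsProbabilityMeasure μ →
        Integrable (fun v : E3 => ‖v‖ ^ α) μ →
        (1 < α → ∫ v, v ∂μ = 0) →
        ∀ φ : E3 → ℂ,
          (∀ ξ : E3, φ ξ = ∫ v, Complex.exp (-(Complex.I * ((inner ℝ v ξ : ℝ) : ℂ))) ∂μ) →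
          memK α φ ∧ dAlpha α φ 1 ≤ ENNReal.ofReal (C * ∫ v, ‖v‖ ^ α ∂μ) := by
  refine ⟨2, two_pos, fun μ hμ hmom hmean φ hφ => ?_⟩
  have hbound : ∀ ξ, ‖φ ξ - (1 : E3 → ℂ) ξ‖ ≤ (2 * ∫ v, ‖v‖ ^ α ∂μ) * ‖ξ‖ ^ α := fun ξ => by
    rw [hφ, Pi.one_apply, mul_right_comm]
    exact norm_integral_exp_neg_I_mul_inner_sub_one_le hα.1.le hα.2 hmom hmean ξ
  have hle := dAlpha_le_ofReal hbound
  exact ⟨⟨⟨μ, hμ, hφ⟩, ne_top_of_le_ne_top ENNReal.ofReal_ne_top hle⟩, hle⟩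
end
end
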